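/- Let h(y) = (1/2)y + D₀·ψ(y)·(y − C₄'), where ψ(y) = C₂y + √(1−C₂²)√(1−y²) − C₃', with 0 ≤ C₂ < 1, D₀ > 0, C₃' ∈ [−1,1], C₄' ≤ C₂. Then h'(C₂) = 1/2 + D₀(1 − C₃') > 0, h''(y) ≤ 0 on [C₂, 1), and h'(y) → −∞ as y → 1⁻; hence there is a unique y* ∈ (C₂, 1) with h'(y*) = 0 and h' changes sign exactly once from positive to negative, so h is unimodal on [C₂, 1]. -/

import Mathlib

open Filter

/-- `ψ(y) = C₂y + √(1−C₂²)·√(1−y²) − C₃'`. -/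
noncomputable def psi (C2 C3' y : ℝ) : ℝ :=
  C2 * y + Real.sqrt (1 - C2^2) * Real.sqrt (1 - y^2) - C3'

/-- `h(y) = (1/2)y + D₀·ψ(y)·(y − C₄')`. -/
noncomputable def hfun (D0 C2 C3' C4' y : ℝ) : ℝ :=
  (1/2) * y + D0 * psi C2 C3' y * (y - C4')

/-!
The derivative `ψ'(y) = C₂ − √(1−C₂²)·y/√(1−y²)` vanishes at `C₂` and is negative on `(C₂, 1)`,
while `ψ'' = −√(1−C₂²)/(1−y²)^{3/2} ≤ 0`. Hence `h'' = D₀(2ψ' + (y − C₄')ψ'')` is negative on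
`(C₂, 1)`, so `h'` decreases strictly from `h'(C₂) = 1/2 + D₀(1 − C₃') > 0`, and it tends to `−∞`
at `1⁻` because of the factor `y/√(1−y²)` in `ψ'`. By the intermediate value theorem `h'` has
exactly one zero `y*` in `(C₂, 1)`, and `h` increases before it and decreases after it.
-/

open Real Set Topology

theorem exists_zero_sign_change_of_strictAntiOn {g : ℝ → ℝ} {a b : ℝ} (hab : a < b)
    (hg : ContinuousOn g (Ico a b)) (hanti : StrictAntiOn g (Ico a b)) (ha : 0 < g a)
    (hb : Tendsto g (𝓝[<] b) atBot) :
    ∃ c ∈ Ioo a b, g c = 0 ∧ (∀ x ∈ Ico a c, 0 < g x) ∧ ∀ x ∈ Ioo c b, g x < 0 := by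
  obtain ⟨d, ⟨had, hdb⟩, hd⟩ : ∃ d ∈ Ioo a b, g d < 0 :=
    (Eventually.and (Ioo_mem_nhdsLT hab) (hb.eventually (eventually_lt_atBot 0))).exists
  obtain ⟨c, ⟨hac, hcd⟩, hc⟩ : ∃ c ∈ Icc a d, g c = 0 :=
    intermediate_value_Icc' had.le (hg.mono (Icc_subset_Ico_right hdb)) ⟨hd.le, ha.le⟩
  have hcIco : c ∈ Ico a b := ⟨hac, hcd.trans_lt hdb⟩
  refine ⟨c, ⟨hac.lt_of_ne ?_, hcIco.2⟩, hc, fun x hx => ?_, fun x hx => ?_⟩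
  · rintro rfl
    exact ha.ne' hc
  · exact hc ▸ hanti ⟨hx.1, hx.2.trans hcIco.2⟩ hcIco hx.2
  · exact hc ▸ hanti hcIco ⟨hac.trans hx.1.le, hx.2⟩ hx.1

theorem exists_unimodalOn_of_strictAntiOn_deriv {f : ℝ → ℝ} {a b : ℝ} (hab : a < b)
    (hf : ContinuousOn f (Icc a b)) (hdf : DifferentiableOn ℝ f (Ioo a b))
    (hf' : ContinuousOn (deriv f) (Ico a b)) (hanti : StrictAntiOn (deriv f) (Ico a b))
    (ha : 0 < deriv f a) (hb : Tendsto (deriv f) (𝓝[<] b) atBot) :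
    ∃ c ∈ Ioo a b, deriv f c = 0 ∧ (∀ x ∈ Ico a c, 0 < deriv f x) ∧
      (∀ x ∈ Ioo c b, deriv f x < 0) ∧ MonotoneOn f (Icc a c) ∧ AntitoneOn f (Icc c b) := by
  obtain ⟨c, hc, hc0, hpos, hneg⟩ := exists_zero_sign_change_of_strictAntiOn hab hf' hanti ha hb
  refine ⟨c, hc, hc0, hpos, hneg, ?_, ?_⟩
  · refine monotoneOn_of_deriv_nonneg (convex_Icc a c) (hf.mono (Icc_subset_Icc_right hc.2.le))
      (hdf.mono ?_) fun x hx => ?_ <;> rw [interior_Icc] at *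
    · exact Ioo_subset_Ioo_right hc.2.le
    · exact (hpos x (Ioo_subset_Ico_self hx)).le
  · refine antitoneOn_of_deriv_nonpos (convex_Icc c b) (hf.mono (Icc_subset_Icc_left hc.1.le))
      (hdf.mono ?_) fun x hx => ?_ <;> rw [interior_Icc] at *
    · exact Ioo_subset_Ioo_left hc.1.le
    · exact (hneg x hx).le

section SqrtOneSubSq

variable {y : ℝ}

theorem sqrt_one_sub_sq_pos (hy : y ^ 2 < 1) : 0 < √(1 - y ^ 2) :=
  sqrt_pos.2 (by linarith)

theorem hasDerivAt_sqrt_one_sub_sq (hy : y ^ 2 < 1) :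
    HasDerivAt (fun x => √(1 - x ^ 2)) (-(y / √(1 - y ^ 2))) y := by
  refine (((hasDerivAt_pow 2 y).const_sub 1).sqrt (by linarith)).congr_deriv ?_
  have := (sqrt_one_sub_sq_pos hy).ne'
  field_simp
  norm_num

theorem hasDerivAt_div_sqrt_one_sub_sq (hy : y ^ 2 < 1) :
    HasDerivAt (fun x => x / √(1 - x ^ 2)) (1 / √(1 - y ^ 2) ^ 3) y := by
  have hpos := sqrt_one_sub_sq_pos hy
  refine ((hasDerivAt_id' y).div (hasDerivAt_sqrt_one_sub_sq hy) hpos.ne').congr_deriv ?_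
  have hsq : √(1 - y ^ 2) ^ 2 = 1 - y ^ 2 := sq_sqrt (by linarith)
  field_simp
  linear_combination hsq

theorem tendsto_div_sqrt_one_sub_sq_atTop :
    Tendsto (fun x => x / √(1 - x ^ 2)) (𝓝[<] 1) atTop := by
  have hsqrt : Tendsto (fun x : ℝ => √(1 - x ^ 2)) (𝓝[<] 1) (𝓝[>] 0) := by
    refine tendsto_nhdsWithin_iff.2 ⟨?_, ?_⟩
    · have : Continuous fun x : ℝ => √(1 - x ^ 2) := by fun_prop
      simpa using this.continuousAt.tendsto.mono_left (nhdsWithin_le_nhds (a := (1 : ℝ)))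
    · filter_upwards [Ioo_mem_nhdsLT (show (-1 : ℝ) < 1 by norm_num)] with x hx
      exact sqrt_one_sub_sq_pos (by nlinarith [hx.1, hx.2])
  simp only [div_eq_mul_inv]
  exact (tendsto_id.mono_left nhdsWithin_le_nhds).pos_mul_atTop one_pos
      (tendsto_inv_nhdsGT_zero.comp hsqrt)

end SqrtOneSubSq

noncomputable def psiDeriv (C2 y : ℝ) : ℝ :=
  C2 - √(1 - C2 ^ 2) * (y / √(1 - y ^ 2))

noncomputable def psiDeriv2 (C2 y : ℝ) : ℝ :=
  -(√(1 - C2 ^ 2) / √(1 - y ^ 2) ^ 3)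

noncomputable def hfunDeriv (D0 C2 C3' C4' y : ℝ) : ℝ :=
  1 / 2 + D0 * (psi C2 C3' y + (y - C4') * psiDeriv C2 y)

noncomputable def hfunDeriv2 (D0 C2 C4' y : ℝ) : ℝ :=
  D0 * (2 * psiDeriv C2 y + (y - C4') * psiDeriv2 C2 y)

section Derivatives

variable (D0 C2 C3' C4' : ℝ) {y : ℝ}

theorem hasDerivAt_psi (hy : y ^ 2 < 1) : HasDerivAt (psi C2 C3') (psiDeriv C2 y) y := by
  refine ((((hasDerivAt_id' y).const_mul C2).add
    ((hasDerivAt_sqrt_one_sub_sq hy).const_mul _)).sub_const C3').congr_deriv ?_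
  rw [psiDeriv]
  ring

theorem hasDerivAt_psiDeriv (hy : y ^ 2 < 1) :
    HasDerivAt (psiDeriv C2) (psiDeriv2 C2 y) y := by
  refine (((hasDerivAt_div_sqrt_one_sub_sq hy).const_mul _).const_sub C2).congr_deriv ?_
  rw [psiDeriv2]
  ring

theorem hasDerivAt_hfun (hy : y ^ 2 < 1) :
    HasDerivAt (hfun D0 C2 C3' C4') (hfunDeriv D0 C2 C3' C4' y) y := by
  refine (((hasDerivAt_id' y).const_mul _).add (((hasDerivAt_psi C2 C3' hy).const_mul D0).mul
    ((hasDerivAt_id' y).sub_const C4'))).congr_deriv ?_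
  rw [hfunDeriv]
  ring

theorem hasDerivAt_hfunDeriv (hy : y ^ 2 < 1) :
    HasDerivAt (hfunDeriv D0 C2 C3' C4') (hfunDeriv2 D0 C2 C4' y) y := by
  refine ((((hasDerivAt_psi C2 C3' hy).add (((hasDerivAt_id' y).sub_const C4').mul
    (hasDerivAt_psiDeriv C2 hy))).const_mul D0).const_add _).congr_deriv ?_
  rw [hfunDeriv2]
  ring

theorem deriv_hfun_eventuallyEq (hy : y ^ 2 < 1) :
    deriv (hfun D0 C2 C3' C4') =ᶠ[𝓝 y] hfunDeriv D0 C2 C3' C4' := by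
  have hopen : IsOpen {x : ℝ | x ^ 2 < 1} := isOpen_lt (by fun_prop) continuous_const
  filter_upwards [hopen.mem_nhds hy] with x hx
  exact (hasDerivAt_hfun D0 C2 C3' C4' hx).deriv

theorem hasDerivAt_deriv_hfun (hy : y ^ 2 < 1) :
    HasDerivAt (deriv (hfun D0 C2 C3' C4')) (hfunDeriv2 D0 C2 C4' y) y :=
  (hasDerivAt_hfunDeriv D0 C2 C3' C4' hy).congr_of_eventuallyEq
    (deriv_hfun_eventuallyEq D0 C2 C3' C4' hy)

end Derivatives

section Signs

variable {D0 C2 C3' C4' y : ℝ}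

theorem psi_self (hC2 : C2 ^ 2 ≤ 1) : psi C2 C3' C2 = 1 - C3' := by
  rw [psi, mul_self_sqrt (by linarith)]
  ring

theorem psiDeriv_self (hC2 : C2 ^ 2 < 1) : psiDeriv C2 C2 = 0 := by
  rw [psiDeriv, mul_div_left_comm, div_self (sqrt_one_sub_sq_pos hC2).ne', mul_one, sub_self]

theorem hfunDeriv_self (hC2 : C2 ^ 2 < 1) :
    hfunDeriv D0 C2 C3' C4' C2 = 1 / 2 + D0 * (1 - C3') := by
  rw [hfunDeriv, psi_self hC2.le, psiDeriv_self hC2, mul_zero, add_zero]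

theorem psiDeriv_neg (hC2 : 0 ≤ C2) (hy : C2 < y) (hy1 : y < 1) : psiDeriv C2 y < 0 := by
  have hC2sq : C2 ^ 2 < 1 := pow_lt_one₀ hC2 (hy.trans hy1) two_ne_zero
  have hysq : y ^ 2 < 1 := pow_lt_one₀ (hC2.trans hy.le) hy1 two_ne_zero
  have hsqrt_le : √(1 - y ^ 2) ≤ √(1 - C2 ^ 2) := sqrt_le_sqrt (by nlinarith)
  rw [psiDeriv, sub_neg, mul_div_assoc', lt_div_iff₀ (sqrt_one_sub_sq_pos hysq)]
  calc C2 * √(1 - y ^ 2) ≤ C2 * √(1 - C2 ^ 2) := mul_le_mul_of_nonneg_left hsqrt_le hC2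
    _ < y * √(1 - C2 ^ 2) := mul_lt_mul_of_pos_right hy (sqrt_one_sub_sq_pos hC2sq)
    _ = √(1 - C2 ^ 2) * y := mul_comm _ _

theorem psiDeriv_nonpos (hC2 : 0 ≤ C2) (hy : C2 ≤ y) (hy1 : y < 1) : psiDeriv C2 y ≤ 0 := by
  rcases hy.eq_or_lt with rfl | hy
  · exact (psiDeriv_self (pow_lt_one₀ hC2 hy1 two_ne_zero)).le
  · exact (psiDeriv_neg hC2 hy hy1).le

theorem psiDeriv2_nonpos (C2 y : ℝ) : psiDeriv2 C2 y ≤ 0 :=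
  neg_nonpos.2 (by positivity)

theorem hfunDeriv2_nonpos (hD0 : 0 ≤ D0) (hC2 : 0 ≤ C2) (hC4' : C4' ≤ y) (hy : C2 ≤ y)
    (hy1 : y < 1) : hfunDeriv2 D0 C2 C4' y ≤ 0 :=
  mul_nonpos_of_nonneg_of_nonpos hD0 <| by
    nlinarith [psiDeriv_nonpos hC2 hy hy1, psiDeriv2_nonpos C2 y]

theorem hfunDeriv2_neg (hD0 : 0 < D0) (hC2 : 0 ≤ C2) (hC4' : C4' ≤ y) (hy : C2 < y)
    (hy1 : y < 1) : hfunDeriv2 D0 C2 C4' y < 0 :=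
  mul_neg_of_pos_of_neg hD0 <| by
    nlinarith [psiDeriv_neg hC2 hy hy1, psiDeriv2_nonpos C2 y]

end Signs

section DerivHfun

variable {D0 C2 C3' C4' : ℝ}

theorem continuousOn_deriv_hfun (hC2 : 0 ≤ C2) :
    ContinuousOn (deriv (hfun D0 C2 C3' C4')) (Ico C2 1) := fun _ hy =>
  (hasDerivAt_deriv_hfun D0 C2 C3' C4'
    (pow_lt_one₀ (hC2.trans hy.1) hy.2 two_ne_zero)).continuousAt.continuousWithinAt

theorem strictAntiOn_deriv_hfun (hC2 : 0 ≤ C2) (hD0 : 0 < D0) (hC4' : C4' ≤ C2) :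
    StrictAntiOn (deriv (hfun D0 C2 C3' C4')) (Ico C2 1) := by
  refine strictAntiOn_of_deriv_neg (convex_Ico C2 1) (continuousOn_deriv_hfun hC2) fun y hy => ?_
  rw [interior_Ico] at hy
  rw [(hasDerivAt_deriv_hfun D0 C2 C3' C4'
    (pow_lt_one₀ (hC2.trans hy.1.le) hy.2 two_ne_zero)).deriv]
  exact hfunDeriv2_neg hD0 hC2 (hC4'.trans hy.1.le) hy.1 hy.2

theorem tendsto_deriv_hfun_atBot (hC2 : C2 ^ 2 < 1) (hD0 : 0 < D0) (hC4' : C4' < 1) :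
    Tendsto (deriv (hfun D0 C2 C3' C4')) (𝓝[<] 1) atBot := by
  have hA : Continuous fun y => 1 / 2 + D0 * (psi C2 C3' y + (y - C4') * C2) := by
    unfold psi; fun_prop
  have hB : Continuous fun y => -(D0 * √(1 - C2 ^ 2) * (y - C4')) := by fun_prop
  have hB1 : -(D0 * √(1 - C2 ^ 2) * (1 - C4')) < 0 :=
    neg_neg_of_pos (mul_pos (mul_pos hD0 (sqrt_one_sub_sq_pos hC2)) (sub_pos.2 hC4'))
  refine (hA.continuousWithinAt.tendsto.add_atBot <| hB.continuousWithinAt.tendsto.neg_mul_atTop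
    hB1 tendsto_div_sqrt_one_sub_sq_atTop).congr' ?_
  filter_upwards [Ioo_mem_nhdsLT (show (-1 : ℝ) < 1 by norm_num)] with y hy
  rw [(hasDerivAt_hfun D0 C2 C3' C4' (by nlinarith [hy.1, hy.2])).deriv, hfunDeriv, psiDeriv]
  ring

end DerivHfun

/-- With `0 ≤ C₂ < 1`, `D₀ > 0`, `C₃' ∈ [−1,1]`, `C₄' ≤ C₂`:
`h'(C₂) = 1/2 + D₀(1 − C₃') > 0`, `h'' ≤ 0` on `[C₂, 1)`, `h'(y) → −∞` as `y → 1⁻`;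
hence there is a unique `y* ∈ (C₂, 1)` with `h'(y*) = 0`, `h'` changes sign exactly
once from positive to negative, and `h` is unimodal on `[C₂, 1]`. -/
theorem h_unimodal (D0 C2 C3' C4' : ℝ)
    (hC2 : 0 ≤ C2) (hC2' : C2 < 1) (hD0 : 0 < D0)
    (hC3' : C3' ∈ Set.Icc (-1 : ℝ) 1) (hC4' : C4' ≤ C2) :
    (deriv (hfun D0 C2 C3' C4') C2 = 1/2 + D0 * (1 - C3')) ∧
    (0 < 1/2 + D0 * (1 - C3')) ∧
    (∀ y ∈ Set.Ico C2 1, deriv (deriv (hfun D0 C2 C3' C4')) y ≤ 0) ∧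
    (Tendsto (deriv (hfun D0 C2 C3' C4')) (nhdsWithin 1 (Set.Iio 1)) atBot) ∧
    (∃! ystar : ℝ, ystar ∈ Set.Ioo C2 1 ∧ deriv (hfun D0 C2 C3' C4') ystar = 0) ∧
    (∃ ystar ∈ Set.Ioo C2 1,
      deriv (hfun D0 C2 C3' C4') ystar = 0 ∧
      (∀ y ∈ Set.Ico C2 ystar, 0 < deriv (hfun D0 C2 C3' C4') y) ∧
      (∀ y ∈ Set.Ioo ystar 1, deriv (hfun D0 C2 C3' C4') y < 0) ∧
      MonotoneOn (hfun D0 C2 C3' C4') (Set.Icc C2 ystar) ∧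
      AntitoneOn (hfun D0 C2 C3' C4') (Set.Icc ystar 1)) := by
  have hsq : ∀ y ∈ Ico C2 1, y ^ 2 < 1 := fun y hy =>
    pow_lt_one₀ (hC2.trans hy.1) hy.2 two_ne_zero
  have hC2sq := hsq C2 ⟨le_rfl, hC2'⟩
  have hderiv_C2 : deriv (hfun D0 C2 C3' C4') C2 = 1 / 2 + D0 * (1 - C3') := by
    rw [(hasDerivAt_hfun D0 C2 C3' C4' hC2sq).deriv, hfunDeriv_self hC2sq]
  have hpos : 0 < 1 / 2 + D0 * (1 - C3') := by nlinarith [hC3'.2]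
  have hlim := tendsto_deriv_hfun_atBot (C3' := C3') hC2sq hD0 (hC4'.trans_lt hC2')
  have hdiff : DifferentiableOn ℝ (hfun D0 C2 C3' C4') (Ioo C2 1) := fun y hy =>
    (hasDerivAt_hfun D0 C2 C3' C4' (hsq y (Ioo_subset_Ico_self hy))).differentiableAt
      |>.differentiableWithinAt
  obtain ⟨c, hc, hc0, hleft, hright, hmono, hanti⟩ :=
    exists_unimodalOn_of_strictAntiOn_deriv hC2' (by unfold hfun psi; fun_prop) hdiff
      (continuousOn_deriv_hfun hC2) (strictAntiOn_deriv_hfun hC2 hD0 hC4') (hderiv_C2 ▸ hpos) hlim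
  refine ⟨hderiv_C2, hpos, fun y hy => ?_, hlim, ⟨c, ⟨hc, hc0⟩, ?_⟩,
    c, hc, hc0, hleft, hright, hmono, hanti⟩
  · rw [(hasDerivAt_deriv_hfun D0 C2 C3' C4' (hsq y hy)).deriv]
    exact hfunDeriv2_nonpos hD0.le hC2 (hC4'.trans hy.1) hy.1 hy.2
  · rintro z ⟨hz, hz0⟩
    rcases lt_trichotomy z c with hzc | rfl | hzc
    · exact absurd hz0 (hleft z ⟨hz.1.le, hzc⟩).ne'
    · rfl
    · exact absurd hz0 (hright z ⟨hzc, hz.2⟩).ne
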